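/- Suppose B < 2(1 − p − s)²/((p + s)(2 − p − s)), (p − s)B ≥ Ψ₁, and η satisfies Ψ₁/(Bp) + s/p ≤ η ≤ 1. Then there exists exactly one Ψ in the interval [Ψ₁, (p − s)B] such that Ψ·A₁(Ψ) = (ηp − s)·R(Ψ). -/
import Mathlib

set_option maxHeartbeats 1600000


/-- Requesters' share. -/
noncomputable def R (p s Ψ : ℝ) : ℝ := (1 - Ψ) * (1 - p - s)

/-- Agents' share in the high-benefit regime. -/
noncomputable def A₁ (p s Ψ : ℝ) : ℝ := ((2 * Ψ - p - s) * (p + s)) / 2 + Ψ * (1 - p - s)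

/-- Threshold Ψ₁. -/
noncomputable def Ψ₁ (p s B : ℝ) : ℝ := (1 - p - s + (B / 2) * (p + s) ^ 2) / (1 - p - s + B)

theorem stmt_4 (p s B η : ℝ) (hs : 0 < s) (hsp : s < p) (hps : p + s < 1) (hB : 0 < B)
    (hη₀ : s / p ≤ η) (hη₁ : η ≤ 1)
    (hBlt : B < 2 * (1 - p - s) ^ 2 / ((p + s) * (2 - p - s)))
    (hcap : Ψ₁ p s B ≤ (p - s) * B)
    (hηlo : Ψ₁ p s B / (B * p) + s / p ≤ η) :
    ∃! Ψ : ℝ, Ψ ∈ Set.Icc (Ψ₁ p s B) ((p - s) * B) ∧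
      Ψ * A₁ p s Ψ = (η * p - s) * R p s Ψ := by
  have hp : 0 < p := hs.trans hsp
  have ht : 0 < 1 - p - s := by linarith
  have hden : 0 < 1 - p - s + B := by linarith
  set a := Ψ₁ p s B with ha
  set b := (p - s) * B with hbdef
  clear_value a b
  have hA : ∀ Ψ : ℝ, A₁ p s Ψ = Ψ - (p + s) ^ 2 / 2 := fun Ψ => by unfold A₁; ring
  have hR : ∀ Ψ : ℝ, R p s Ψ = (1 - Ψ) * (1 - p - s) := fun Ψ => rfl
  have hapos : 0 < a := by
    rw [ha]; unfold Ψ₁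
    apply div_pos _ hden
    nlinarith [sq_nonneg (p + s), mul_pos hB (mul_pos (by linarith : (0:ℝ) < p + s) (by linarith : (0:ℝ) < p + s))]
  have ha1 : a < 1 := by
    rw [ha]; unfold Ψ₁
    rw [div_lt_one hden]
    nlinarith [mul_pos hB (by nlinarith : (0:ℝ) < 2 - (p + s) ^ 2)]
  have hkey : B * (a - (p + s) ^ 2 / 2) = (1 - a) * (1 - p - s) := by
    rw [ha]; unfold Ψ₁; field_simp; ring
  have hD : 0 < (p + s) * (2 - p - s) := by
    apply mul_pos <;> linarith
  have hBlt' : B * ((p + s) * (2 - p - s)) < 2 * (1 - p - s) ^ 2 := by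
    rw [lt_div_iff₀ hD] at hBlt; exact hBlt
  have hb1 : b < 1 := by
    have h1 : (p - s) * (B * ((p + s) * (2 - p - s))) < (p - s) * (2 * (1 - p - s) ^ 2) :=
      mul_lt_mul_of_pos_left hBlt' (by linarith)
    have h2 : (p - s) * (2 * (1 - p - s) ^ 2) ≤ (p + s) * (2 - p - s) := by
      nlinarith [mul_nonneg hs.le (sq_nonneg (1 - p - s)),
        mul_nonneg (mul_nonneg (by linarith : (0:ℝ) ≤ p + s) (by linarith : (0:ℝ) ≤ 1 - (1 - p - s)))
          (by linarith : (0:ℝ) ≤ 1 + 2 * (1 - p - s))]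
    nlinarith [h1, h2, hD]
  have hbpos : 0 < b := lt_of_lt_of_le hapos hcap
  have hBp : 0 < B * p := mul_pos hB hp
  have hc : 0 < η * p - s := by
    have h1 : s / p < η := lt_of_lt_of_le (lt_add_of_pos_left _ (div_pos hapos hBp)) hηlo
    rw [div_lt_iff₀ hp] at h1; linarith
  have hηB : a ≤ (η * p - s) * B := by
    have h2 : a / (B * p) * p + s ≤ η * p := by
      have h3 := mul_le_mul_of_nonneg_right hηlo hp.le
      rw [add_mul, div_mul_cancel₀ s hp.ne'] at h3
      exact h3
    have h4 : a / (B * p) * p = a / B := by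
      field_simp
    rw [h4] at h2
    have h5 : a / B ≤ η * p - s := by linarith
    rw [div_le_iff₀ hB] at h5; linarith [h5]
  -- sign at the endpoints
  have hga : a * A₁ p s a - (η * p - s) * R p s a ≤ 0 := by
    rw [hA, hR]
    have hk2 : B * (a * (a - (p + s) ^ 2 / 2)) = a * ((1 - a) * (1 - p - s)) := by
      rw [mul_left_comm, hkey]
    have hprod : a * ((1 - a) * (1 - p - s)) ≤ (η * p - s) * B * ((1 - a) * (1 - p - s)) :=
      mul_le_mul_of_nonneg_right hηB (mul_nonneg (by linarith) ht.le)
    have hexp : B * (a * (a - (p + s) ^ 2 / 2) - (η * p - s) * ((1 - a) * (1 - p - s)))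
        = B * (a * (a - (p + s) ^ 2 / 2)) - (η * p - s) * B * ((1 - a) * (1 - p - s)) := by
      ring
    have h9 : B * (a * (a - (p + s) ^ 2 / 2) - (η * p - s) * ((1 - a) * (1 - p - s))) ≤ 0 := by
      rw [hexp, hk2]; linarith
    have h10 := div_nonpos_of_nonpos_of_nonneg h9 hB.le
    rwa [mul_div_cancel_left₀ _ hB.ne'] at h10
  have hgb : 0 ≤ b * A₁ p s b - (η * p - s) * R p s b := by
    rw [hA, hR]
    have hbq : (1 - b) * (1 - p - s) ≤ B * (b - (p + s) ^ 2 / 2) := by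
      nlinarith [hkey, mul_nonneg hB.le (sub_nonneg.2 hcap),
        mul_le_mul_of_nonneg_right (by linarith : 1 - b ≤ 1 - a) ht.le]
    have hcle : η * p - s ≤ p - s := by nlinarith [mul_le_mul_of_nonneg_right hη₁ hp.le]
    have h6 : b * ((1 - b) * (1 - p - s)) ≤ b * (B * (b - (p + s) ^ 2 / 2)) :=
      mul_le_mul_of_nonneg_left hbq hbpos.le
    have h7 : (η * p - s) * ((1 - b) * (1 - p - s)) ≤ (p - s) * ((1 - b) * (1 - p - s)) :=
      mul_le_mul_of_nonneg_right hcle (mul_nonneg (by linarith) ht.le)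
    have hY1 : B * ((p - s) * ((1 - b) * (1 - p - s))) = b * ((1 - b) * (1 - p - s)) := by
      rw [hbdef]; ring
    have h7' : B * ((η * p - s) * ((1 - b) * (1 - p - s)))
        ≤ B * ((p - s) * ((1 - b) * (1 - p - s))) := mul_le_mul_of_nonneg_left h7 hB.le
    have hexp : B * (b * (A₁ p s b) - (η * p - s) * ((1 - b) * (1 - p - s)))
        = b * (B * (b - (p + s) ^ 2 / 2)) - B * ((η * p - s) * ((1 - b) * (1 - p - s))) := by
      rw [hA]; ring
    have h9 : 0 ≤ B * (b * (A₁ p s b) - (η * p - s) * ((1 - b) * (1 - p - s))) := by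
      rw [hexp]; linarith
    have h10 := div_nonneg h9 hB.le
    rw [mul_div_cancel_left₀ _ hB.ne'] at h10
    rw [hA] at h10
    exact h10
  -- existence via IVT
  have hcont : ContinuousOn (fun Ψ : ℝ => Ψ * A₁ p s Ψ - (η * p - s) * R p s Ψ) (Set.Icc a b) := by
    apply Continuous.continuousOn
    unfold A₁ R
    fun_prop
  obtain ⟨Ψ, hmem, hval⟩ := intermediate_value_Icc hcap hcont ⟨hga, hgb⟩
  have heq : Ψ * A₁ p s Ψ - (η * p - s) * R p s Ψ = 0 := hval
  have hΨpos : 0 < Ψ := lt_of_lt_of_le hapos hmem.1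
  have e1 : Ψ ^ 2 - Ψ * ((p + s) ^ 2 / 2) = (η * p - s) * ((1 - Ψ) * (1 - p - s)) := by
    rw [hA, hR] at heq; linear_combination heq
  refine ⟨Ψ, ⟨hmem, by linarith⟩, ?_⟩
  rintro Ψ' ⟨⟨hΨ'a, hΨ'b⟩, heq'⟩
  have hΨ'pos : 0 < Ψ' := lt_of_lt_of_le hapos hΨ'a
  have e2 : Ψ' ^ 2 - Ψ' * ((p + s) ^ 2 / 2) = (η * p - s) * ((1 - Ψ') * (1 - p - s)) := by
    rw [hA, hR] at heq'; linear_combination heq'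
  have hfac : (Ψ' - Ψ) * (Ψ' + Ψ - (p + s) ^ 2 / 2 + (η * p - s) * (1 - p - s)) = 0 := by
    linear_combination e2 - e1
  rcases mul_eq_zero.mp hfac with h | h
  · exact sub_eq_zero.mp h
  · exfalso
    have hcon : Ψ * Ψ' + (η * p - s) * (1 - p - s) = 0 := by
      linear_combination Ψ * h - e1
    nlinarith [mul_pos hΨpos hΨ'pos, mul_pos hc ht]
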